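/- arXiv:1302.1589 — 3 statements merged into one kernel-verified Lean document; each statement's English description precedes it below -/
import Mathlib

section
/- Let G ⊂ SL(2,ℂ) be a finite subgroup and P ∈ ℂ[x,y]. Then P(0,0) = 0 and P is fixed by the G-action on ℂ[x,y] if and only if there exists a pair (f₁, f₂) ∈ ℂ[x,y]² fixed by the G-action on endomorphisms such that f₁y − f₂x = P. -/
/-!
Write `W(F) = f₁y - f₂x = det (F(v), v)`. For `g ∈ SL(2,ℂ)`,
`W(g·F)(v) = det (g F(g⁻¹v), g (g⁻¹v)) = det g · W(F)(g⁻¹v) = (g·W(F))(v)`,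
so `W` is an equivariant linear map; its image is the ideal `(x, y)` of polynomials vanishing at
the origin. Hence `W` sends fixed pairs to fixed polynomials, and conversely a fixed `P = W(F)` is
also `W` of the average of `F` over `G`, which is fixed.
-/

open MvPolynomial

/-- Substitution of a linear map (given by a 2×2 matrix) into a polynomial in two
variables: `(P ∘ M)(v) = P (M v)`.  In particular, `subst M⁻¹ P` is the polynomial
`P ∘ M⁻¹`, i.e. the action `g · P = P ∘ g⁻¹`. -/
noncomputable def subst (M : Matrix (Fin 2) (Fin 2) ℂ) (P : MvPolynomial (Fin 2) ℂ) :
    MvPolynomial (Fin 2) ℂ :=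
  aeval (fun i => ∑ j, C (M i j) * X j) P

/-- The action of `g ∈ SL(2,ℂ)` on polynomial endomorphisms `F = (f₁, f₂)` of 𝔸²,
given by `g · F = g ∘ F ∘ g⁻¹`. -/
noncomputable def pairAct (g : Matrix.SpecialLinearGroup (Fin 2) ℂ)
    (F : Fin 2 → MvPolynomial (Fin 2) ℂ) : Fin 2 → MvPolynomial (Fin 2) ℂ :=
  fun i => ∑ j, C ((g : Matrix (Fin 2) (Fin 2) ℂ) i j) *
    subst ((g⁻¹ : Matrix.SpecialLinearGroup (Fin 2) ℂ) : Matrix (Fin 2) (Fin 2) ℂ) (F j)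

namespace Representation

variable {k G V W : Type*} [CommRing k] [Group G] [Fintype G] [Invertible (Fintype.card G : k)]
  [AddCommGroup V] [Module k V] [AddCommGroup W] [Module k W]
  {ρ : Representation k G V} {σ : Representation k G W} {f : V →ₗ[k] W}

theorem IsIntertwiningMap.map_averageMap (hf : ρ.IsIntertwiningMap σ f) (v : V) :
    f (ρ.averageMap v) = σ.averageMap (f v) := by
  simp [GroupAlgebra.average, map_sum, hf.isIntertwining]

end Representation

local notation "SL₂" => Matrix.SpecialLinearGroup (Fin 2) ℂ

lemma MvPolynomial.mem_idealOfVars_iff {σ R : Type*} [CommSemiring R] (p : MvPolynomial σ R) :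
    p ∈ idealOfVars σ R ↔ constantCoeff p = 0 := by
  simpa [constantCoeff_eq, Finsupp.degree_eq_zero_iff] using mem_pow_idealOfVars_iff' 1 p

noncomputable def substAlgHom (M : Matrix (Fin 2) (Fin 2) ℂ) :
    MvPolynomial (Fin 2) ℂ →ₐ[ℂ] MvPolynomial (Fin 2) ℂ :=
  aeval fun i => ∑ j, C (M i j) * X j

@[simp] lemma coe_substAlgHom (M : Matrix (Fin 2) (Fin 2) ℂ) : ⇑(substAlgHom M) = subst M := rfl

@[simp] lemma subst_C (M : Matrix (Fin 2) (Fin 2) ℂ) (c : ℂ) : subst M (C c) = C c :=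
  aeval_C _ _

@[simp] lemma subst_X (M : Matrix (Fin 2) (Fin 2) ℂ) (i : Fin 2) :
    subst M (X i) = ∑ j, C (M i j) * X j :=
  aeval_X _ _

@[simp] lemma subst_add (M : Matrix (Fin 2) (Fin 2) ℂ) (P Q : MvPolynomial (Fin 2) ℂ) :
    subst M (P + Q) = subst M P + subst M Q :=
  map_add (substAlgHom M) P Q

@[simp] lemma subst_mul (M : Matrix (Fin 2) (Fin 2) ℂ) (P Q : MvPolynomial (Fin 2) ℂ) :
    subst M (P * Q) = subst M P * subst M Q :=
  map_mul (substAlgHom M) P Q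

@[simp] lemma subst_sub (M : Matrix (Fin 2) (Fin 2) ℂ) (P Q : MvPolynomial (Fin 2) ℂ) :
    subst M (P - Q) = subst M P - subst M Q :=
  map_sub (substAlgHom M) P Q

lemma subst_one (P : MvPolynomial (Fin 2) ℂ) : subst 1 P = P := by
  rw [← coe_substAlgHom, substAlgHom]
  simp [Matrix.one_apply]

lemma substAlgHom_mul (M N : Matrix (Fin 2) (Fin 2) ℂ) :
    substAlgHom (N * M) = (substAlgHom M).comp (substAlgHom N) := by
  refine algHom_ext fun i => ?_
  simp only [substAlgHom, AlgHom.comp_apply, aeval_X, map_add, map_mul, aeval_C, algebraMap_eq,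
    Matrix.mul_apply, Fin.sum_univ_two]
  ring

lemma subst_subst (M N : Matrix (Fin 2) (Fin 2) ℂ) (P : MvPolynomial (Fin 2) ℂ) :
    subst M (subst N P) = subst (N * M) P := by
  simp only [← coe_substAlgHom, substAlgHom_mul, AlgHom.comp_apply]

noncomputable def substRep : Representation ℂ SL₂ (MvPolynomial (Fin 2) ℂ) where
  toFun g := (substAlgHom (g⁻¹ : SL₂)).toLinearMap
  map_one' := LinearMap.ext fun P => by simp [subst_one]
  map_mul' g h := LinearMap.ext fun P => by simp [subst_subst]

@[simp] lemma substRep_apply (g : SL₂) (P : MvPolynomial (Fin 2) ℂ) :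
    substRep g P = subst (g⁻¹ : SL₂) P := rfl

lemma pairAct_one (F : Fin 2 → MvPolynomial (Fin 2) ℂ) : pairAct 1 F = F := by
  funext i
  simp [pairAct, subst_one, Matrix.one_apply]

lemma pairAct_mul (g h : SL₂) (F : Fin 2 → MvPolynomial (Fin 2) ℂ) :
    pairAct (g * h) F = pairAct g (pairAct h F) := by
  funext i
  simp only [pairAct, mul_inv_rev, Matrix.SpecialLinearGroup.coe_mul, ← subst_subst, subst_add,
    subst_mul, subst_C, Matrix.mul_apply, Fin.sum_univ_two, map_add, map_mul]
  ring

noncomputable def pairRep : Representation ℂ SL₂ (Fin 2 → MvPolynomial (Fin 2) ℂ) where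
  toFun g :=
    { toFun := pairAct g
      map_add' F F' := funext fun i => by
        simp only [pairAct, Pi.add_apply, subst_add, mul_add, Finset.sum_add_distrib]
      map_smul' c F := funext fun i => by
        simp only [pairAct, Pi.smul_apply, smul_eq_C_mul, subst_mul, subst_C, RingHom.id_apply,
          Finset.mul_sum, mul_left_comm] }
  map_one' := LinearMap.ext pairAct_one
  map_mul' g h := LinearMap.ext (pairAct_mul g h)

@[simp] lemma pairRep_apply (g : SL₂) (F : Fin 2 → MvPolynomial (Fin 2) ℂ) :
    pairRep g F = pairAct g F := rfl

noncomputable def wedge : (Fin 2 → MvPolynomial (Fin 2) ℂ) →ₗ[ℂ] MvPolynomial (Fin 2) ℂ where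
  toFun F := F 0 * X 1 - F 1 * X 0
  map_add' F F' := by simp only [Pi.add_apply]; ring
  map_smul' c F := by simp only [Pi.smul_apply, smul_eq_C_mul, RingHom.id_apply]; ring

lemma wedge_apply (F : Fin 2 → MvPolynomial (Fin 2) ℂ) : wedge F = F 0 * X 1 - F 1 * X 0 := rfl

lemma isIntertwiningMap_wedge : pairRep.IsIntertwiningMap substRep wedge := by
  refine ⟨fun g F => ?_⟩
  simp only [pairRep_apply, substRep_apply, wedge_apply, pairAct, subst_sub, subst_mul, subst_X,
    Fin.sum_univ_two]
  simp only [Matrix.SpecialLinearGroup.SL2_inv_expl, Matrix.cons_val_zero, Matrix.cons_val_one,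
    C_neg]
  ring

lemma exists_wedge_eq_of_eval_zero (P : MvPolynomial (Fin 2) ℂ) (hP : eval 0 P = 0) :
    ∃ F, wedge F = P := by
  rw [eval_zero, ← mem_idealOfVars_iff, Ideal.mem_span_range_iff_exists_fun] at hP
  obtain ⟨c, rfl⟩ := hP
  exact ⟨![c 1, -c 0], by
    simp only [wedge_apply, Matrix.cons_val_zero, Matrix.cons_val_one, Fin.sum_univ_two]
    ring⟩

/-- For a finite subgroup `G ⊂ SL(2,ℂ)` and `P ∈ ℂ[x,y]`: `P(0,0) = 0` and `P` is
fixed by `G` (acting by `g·P = P∘g⁻¹`) if and only if there is a polynomial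
endomorphism `F = (f₁,f₂)` of 𝔸² fixed by `G` (acting by `g·F = g∘F∘g⁻¹`) with
`f₁y - f₂x = P`. -/
theorem stmt8 (G : Subgroup (Matrix.SpecialLinearGroup (Fin 2) ℂ))
    (hGfin : (G : Set (Matrix.SpecialLinearGroup (Fin 2) ℂ)).Finite)
    (P : MvPolynomial (Fin 2) ℂ) :
    (eval (0 : Fin 2 → ℂ) P = 0 ∧
        ∀ g ∈ G, subst ((g⁻¹ : Matrix.SpecialLinearGroup (Fin 2) ℂ) : Matrix (Fin 2) (Fin 2) ℂ) P = P) ↔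
      ∃ F : Fin 2 → MvPolynomial (Fin 2) ℂ,
        (∀ g ∈ G, pairAct g F = F) ∧ F 0 * X 1 - F 1 * X 0 = P := by
  have : Fintype G := hGfin.fintype
  have : Invertible (Fintype.card G : ℂ) :=
    invertibleOfNonzero (Nat.cast_ne_zero.mpr Fintype.card_ne_zero)
  let ρ : Representation ℂ G (Fin 2 → MvPolynomial (Fin 2) ℂ) := pairRep.comp G.subtype
  let σ : Representation ℂ G (MvPolynomial (Fin 2) ℂ) := substRep.comp G.subtype
  have hwedge : ρ.IsIntertwiningMap σ wedge := ⟨fun g => isIntertwiningMap_wedge.isIntertwining g⟩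
  constructor
  · rintro ⟨hP0, hPfix⟩
    obtain ⟨F, rfl⟩ := exists_wedge_eq_of_eval_zero P hP0
    refine ⟨ρ.averageMap F, fun g hg => ρ.averageMap_invariant F ⟨g, hg⟩, ?_⟩
    rw [← wedge_apply, hwedge.map_averageMap, σ.averageMap_id _ fun g => hPfix g g.2]
  · rintro ⟨F, hF, rfl⟩
    refine ⟨by simp, fun g hg => ?_⟩
    rw [← wedge_apply, ← substRep_apply, ← isIntertwiningMap_wedge.isIntertwining, pairRep_apply,
      hF g hg]
end

section
/- The map ι from (ℙ¹×ℙ¹)∖Δ to ℂ³ is PGL(2,ℂ)-equivariant: for g = [a b; c d] ∈ GL(2,ℂ), applying g diagonally to ([y₀:y₁],[z₀:z₁]) and then ι equals applying the linear map (1/(ad−bc))·[[ad+bc, ac, bd],[2ab, a², b²],[2cd, c², d²]] to ι([y₀:y₁],[z₀:z₁]). -/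
/-- The complex projective line. -/
abbrev P1 := Projectivization ℂ (Fin 2 → ℂ)

/-- The linear map of ℂ³ associated to `[a b; c d] ∈ GL(2,ℂ)`, given by the matrix
`(1/(ad-bc))·[[ad+bc, ac, bd], [2ab, a², b²], [2cd, c², d²]]`. -/
noncomputable def mobius3 (a b c d : ℂ) (w : ℂ × ℂ × ℂ) : ℂ × ℂ × ℂ :=
  (((a * d + b * c) * w.1 + a * c * w.2.1 + b * d * w.2.2) / (a * d - b * c),
    (2 * a * b * w.1 + a ^ 2 * w.2.1 + b ^ 2 * w.2.2) / (a * d - b * c),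
    (2 * c * d * w.1 + c ^ 2 * w.2.1 + d ^ 2 * w.2.2) / (a * d - b * c))

lemma auxD (y₀ y₁ z₀ z₁ : ℂ) (hy : (![y₀, y₁] : Fin 2 → ℂ) ≠ 0)
    (hz : (![z₀, z₁] : Fin 2 → ℂ) ≠ 0)
    (hne : Projectivization.mk ℂ ![y₀, y₁] hy ≠ Projectivization.mk ℂ ![z₀, z₁] hz) :
    y₀ * z₁ - y₁ * z₀ ≠ 0 := by
  intro h
  apply hne
  rw [Projectivization.mk_eq_mk_iff]
  have h' : y₀ * z₁ = y₁ * z₀ := by linear_combination h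
  by_cases hz0 : z₀ = 0
  · have hz1 : z₁ ≠ 0 := by
      intro hz1; apply hz; funext i; fin_cases i <;> simp [hz0, hz1]
    have hy0 : y₀ = 0 := by
      have := h'; rw [hz0, mul_zero] at this
      exact (mul_eq_zero.mp this).resolve_right hz1
    have hy1 : y₁ ≠ 0 := by
      intro h1; apply hy; funext i; fin_cases i <;> simp [hy0, h1]
    refine ⟨Units.mk0 (y₁ / z₁) (div_ne_zero hy1 hz1), ?_⟩
    funext i; fin_cases i <;> simp [hz0, hy0] <;> field_simp
  · refine ⟨Units.mk0 (y₀ / z₀) (div_ne_zero ?_ hz0), ?_⟩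
    · intro h0
      have hy1 : y₁ = 0 := by
        have := h'; rw [h0, zero_mul] at this
        exact (mul_eq_zero.mp this.symm).resolve_right hz0
      exact hy (by funext i; fin_cases i <;> simp [h0, hy1])
    · funext i; fin_cases i
      · simp; field_simp
      · simp; field_simp; linear_combination h

/-- The embedding `ι : (ℙ¹×ℙ¹) ∖ Δ → ℂ³` is PGL(2,ℂ)-equivariant: applying
`g = [a b; c d] ∈ GL(2,ℂ)` diagonally on `ℙ¹ × ℙ¹` and then `ι` is the same as
applying `ι` and then the linear map
`(1/(ad-bc))·[[ad+bc, ac, bd], [2ab, a², b²], [2cd, c², d²]]` of ℂ³. -/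
theorem stmt15 (ι : {p : P1 × P1 // p.1 ≠ p.2} → ℂ × ℂ × ℂ)
    (hι : ∀ (y₀ y₁ z₀ z₁ : ℂ) (hy : (![y₀, y₁] : Fin 2 → ℂ) ≠ 0)
      (hz : (![z₀, z₁] : Fin 2 → ℂ) ≠ 0)
      (hne : Projectivization.mk ℂ ![y₀, y₁] hy ≠ Projectivization.mk ℂ ![z₀, z₁] hz),
      ι ⟨(Projectivization.mk ℂ ![y₀, y₁] hy, Projectivization.mk ℂ ![z₀, z₁] hz), hne⟩ =
        ((y₀ * z₁ + y₁ * z₀) / (y₀ * z₁ - y₁ * z₀),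
          2 * y₀ * z₀ / (y₀ * z₁ - y₁ * z₀),
          2 * y₁ * z₁ / (y₀ * z₁ - y₁ * z₀)))
    (a b c d : ℂ) (hdet : a * d - b * c ≠ 0)
    (y₀ y₁ z₀ z₁ : ℂ) (hy : (![y₀, y₁] : Fin 2 → ℂ) ≠ 0)
    (hz : (![z₀, z₁] : Fin 2 → ℂ) ≠ 0)
    (hne : Projectivization.mk ℂ ![y₀, y₁] hy ≠ Projectivization.mk ℂ ![z₀, z₁] hz)
    (hy' : (![a * y₀ + b * y₁, c * y₀ + d * y₁] : Fin 2 → ℂ) ≠ 0)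
    (hz' : (![a * z₀ + b * z₁, c * z₀ + d * z₁] : Fin 2 → ℂ) ≠ 0)
    (hne' : Projectivization.mk ℂ ![a * y₀ + b * y₁, c * y₀ + d * y₁] hy' ≠
      Projectivization.mk ℂ ![a * z₀ + b * z₁, c * z₀ + d * z₁] hz') :
    ι ⟨(Projectivization.mk ℂ ![a * y₀ + b * y₁, c * y₀ + d * y₁] hy',
        Projectivization.mk ℂ ![a * z₀ + b * z₁, c * z₀ + d * z₁] hz'), hne'⟩ =
      mobius3 a b c d
        (ι ⟨(Projectivization.mk ℂ ![y₀, y₁] hy, Projectivization.mk ℂ ![z₀, z₁] hz), hne⟩) := by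
  have hD := auxD y₀ y₁ z₀ z₁ hy hz hne
  rw [hι _ _ _ _ hy' hz' hne', hι _ _ _ _ hy hz hne]
  have hD' : (a * y₀ + b * y₁) * (c * z₀ + d * z₁) - (c * y₀ + d * y₁) * (a * z₀ + b * z₁)
      = (a * d - b * c) * (y₀ * z₁ - y₁ * z₀) := by ring
  simp only [mobius3]
  refine Prod.ext ?_ (Prod.ext ?_ ?_) <;> simp only [hD'] <;> field_simp <;> ring
end

section
/- Let n ≥ 1, let ξ be a primitive n-th root of unity, and let (a,b) ∈ ℂ² ∖ {(0,0)}. Then with f₁ = b·y^{n−1}(a x^n + b y^n) and f₂ = −a·x^{n−1}(a x^n + b y^n), the identity f₁·y − f₂·x = (a x^n + b y^n)² holds, and the pair (f₁,f₂) is fixed by the endomorphism action of the cyclic group generated by diag(ζ, ζ⁻¹) ∈ SL(2,ℂ), where ζ is a primitive 2n-th root of unity. -/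
open MvPolynomial

/-- For `n ≥ 1`, `ξ` a primitive `n`-th root of unity, `(a,b) ≠ (0,0)`, set
`f₁ = b·y^{n-1}(a xⁿ + b yⁿ)` and `f₂ = -a·x^{n-1}(a xⁿ + b yⁿ)`.  Then
`f₁·y - f₂·x = (a xⁿ + b yⁿ)²`, and the pair `(f₁,f₂)` is fixed by the
endomorphism action of the cyclic group generated by `diag(ζ, ζ⁻¹) ∈ SL(2,ℂ)`
(where `ζ` is a primitive `2n`-th root of unity), i.e.
`f₁(ζ⁻¹x, ζy) = ζ⁻¹·f₁(x,y)` and `f₂(ζ⁻¹x, ζy) = ζ·f₂(x,y)`. -/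
theorem stmt17 (n : ℕ) (hn : 1 ≤ n) (ξ ζ : ℂ) (hξ : IsPrimitiveRoot ξ n)
    (hζ : IsPrimitiveRoot ζ (2 * n)) (a b : ℂ) (hab : (a, b) ≠ (0, 0)) :
    (C b * X 1 ^ (n - 1) * (C a * X 0 ^ n + C b * X 1 ^ n)) * X 1 -
        (-(C a * X 0 ^ (n - 1) * (C a * X 0 ^ n + C b * X 1 ^ n))) * X 0 =
      (C a * X 0 ^ n + C b * X 1 ^ n) ^ 2 ∧
    aeval (![C ζ⁻¹ * X 0, C ζ * X 1] : Fin 2 → MvPolynomial (Fin 2) ℂ)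
        (C b * X 1 ^ (n - 1) * (C a * X 0 ^ n + C b * X 1 ^ n)) =
      C ζ⁻¹ * (C b * X 1 ^ (n - 1) * (C a * X 0 ^ n + C b * X 1 ^ n)) ∧
    aeval (![C ζ⁻¹ * X 0, C ζ * X 1] : Fin 2 → MvPolynomial (Fin 2) ℂ)
        (-(C a * X 0 ^ (n - 1) * (C a * X 0 ^ n + C b * X 1 ^ n))) =
      C ζ * (-(C a * X 0 ^ (n - 1) * (C a * X 0 ^ n + C b * X 1 ^ n))) := by
  obtain ⟨m, rfl⟩ : ∃ m, n = m + 1 := ⟨n - 1, (Nat.succ_pred_eq_of_pos hn).symm⟩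
  simp only [Nat.add_sub_cancel]
  have hz : ζ ≠ 0 := hζ.ne_zero (by omega)
  have h2 : (ζ ^ (m + 1)) * (ζ ^ (m + 1)) = 1 := by
    rw [← pow_add]
    have := hζ.pow_eq_one
    rwa [show 2 * (m + 1) = (m + 1) + (m + 1) by ring] at this
  have hn1 : ζ ^ (m + 1) = -1 := by
    rcases mul_self_eq_one_iff.mp h2 with h | h
    · exact absurd h (hζ.pow_ne_one_of_pos_of_lt (by omega) (by omega))
    · exact h
  have hinv : (ζ⁻¹) ^ (m + 1) = -1 := by rw [inv_pow, hn1]; norm_num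
  have hm : ζ ^ m = -ζ⁻¹ := by
    have h : ζ ^ m * ζ = -1 := by rw [← pow_succ]; exact hn1
    field_simp
    linear_combination h
  have hm' : (ζ⁻¹) ^ m = -ζ := by
    rw [inv_pow, hm, inv_neg, inv_inv]
  refine ⟨by ring, ?_, ?_⟩ <;>
  · simp only [map_mul, map_add, map_pow, map_neg, aeval_C, aeval_X,
      Matrix.cons_val_zero, Matrix.cons_val_one, Matrix.head_cons,
      mul_pow, ← C_pow, hn1, hinv, hm, hm', map_neg, map_one, C_neg, C_1, MvPolynomial.algebraMap_eq]
    ring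
end
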